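/- arXiv:2605.23476 — 2 statements merged into one kernel-verified Lean document; each statement's English description precedes it below -/
import Mathlib

section
/- Let H be a real symmetric n×n matrix, M a real diagonal n×n matrix with positive diagonal entries, η > 0, and J = I - η M⁻¹H. Then J is normal (J J^T = J^T J) if and only if H and M commute. -/
/-!
Write `A = M⁻¹ H`, so that `J = 1 - η A` is normal iff `A` is. If `H` commutes with `M`, then `A`
is symmetric. Conversely, if `A` is normal, then `Y = M⁻¹ H M` satisfies `Yᵀ Y = H²`, while `Y` is
similar to `H`; hence `tr (Y Y) = tr (Yᵀ Y)`, which over `ℝ` forces `Y` to be symmetric, i.e. `H`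
commutes with `M²`. As `M` is diagonal with positive entries, `H` then commutes with `M`.
-/

open Matrix

namespace Matrix

variable {n : Type*} [Fintype n]

theorem isSymm_of_trace_mul_self_eq {Y : Matrix n n ℝ}
    (h : trace (Y * Y) = trace (Yᵀ * Y)) : Y.IsSymm := by
  have hzero : trace ((Y - Yᵀ)ᴴ * (Y - Yᵀ)) = 0 := by
    rw [conjTranspose_eq_transpose_of_trivial, transpose_sub, transpose_transpose]
    simp only [sub_mul, mul_sub, trace_sub]
    rw [trace_mul_comm Y Yᵀ, ← transpose_mul, trace_transpose, h]
    ring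
  rw [trace_conjTranspose_mul_self_eq_zero_iff, sub_eq_zero] at hzero
  exact hzero.symm

variable [DecidableEq n]

theorem commute_transpose_one_sub_smul_iff {R : Type*} [CommRing R] [NoZeroDivisors R]
    {A : Matrix n n R} {c : R} (hc : c ≠ 0) :
    Commute (1 - c • A) (1 - c • A)ᵀ ↔ Commute A Aᵀ := by
  have key : (1 - c • A) * (1 - c • A)ᵀ - (1 - c • A)ᵀ * (1 - c • A)
      = (c * c) • (A * Aᵀ - Aᵀ * A) := by
    simp only [transpose_sub, transpose_smul, transpose_one, sub_mul, mul_sub, Matrix.smul_mul,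
      Matrix.mul_smul, smul_smul, smul_sub, one_mul, mul_one]
    abel
  rw [commute_iff_eq, commute_iff_eq, ← sub_eq_zero, key, smul_eq_zero, sub_eq_zero]
  simp [hc]

theorem commute_inv_mul_transpose_of_commute {M H : Matrix n n ℝ} (hM : M.IsSymm)
    (hM' : IsUnit M.det) (hH : H.IsSymm) (h : Commute M H) :
    Commute (M⁻¹ * H) (M⁻¹ * H)ᵀ := by
  have hsymm : (M⁻¹ * H)ᵀ = M⁻¹ * H := calc
    (M⁻¹ * H)ᵀ = M⁻¹ * (M * H) * M⁻¹ := by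
      rw [transpose_mul, hH.eq, transpose_nonsing_inv, hM.eq, ← mul_assoc,
        nonsing_inv_mul _ hM', one_mul]
    _ = M⁻¹ * H := by
      rw [h.eq, mul_assoc, mul_assoc, mul_nonsing_inv _ hM', mul_one]
  rw [hsymm]

theorem commute_mul_self_of_commute_inv_mul_transpose {M H : Matrix n n ℝ} (hM : M.IsSymm)
    (hM' : IsUnit M.det) (hH : H.IsSymm) (hA : Commute (M⁻¹ * H) (M⁻¹ * H)ᵀ) :
    Commute (M * M) H := by
  have hAT : (M⁻¹ * H)ᵀ = H * M⁻¹ := by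
    rw [transpose_mul, hH.eq, transpose_nonsing_inv, hM.eq]
  have hYT : (M⁻¹ * H * M)ᵀ = M * H * M⁻¹ := by
    rw [transpose_mul, hAT, hM.eq, mul_assoc]
  have hYTY : (M⁻¹ * H * M)ᵀ * (M⁻¹ * H * M) = H * H := calc
    _ = M * ((M⁻¹ * H)ᵀ * (M⁻¹ * H)) * M := by rw [hYT, hAT]; simp only [mul_assoc]
    _ = M * ((M⁻¹ * H) * (M⁻¹ * H)ᵀ) * M := by rw [hA.eq]
    _ = H * H := by
      rw [hAT]
      simp only [← mul_assoc, mul_nonsing_inv _ hM', one_mul]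
      simp only [mul_assoc, nonsing_inv_mul _ hM', mul_one]
  have hYY : trace ((M⁻¹ * H * M) * (M⁻¹ * H * M)) = trace (H * H) := by
    rw [show (M⁻¹ * H * M) * (M⁻¹ * H * M) = M⁻¹ * (H * H * M) by
      simp only [mul_assoc, mul_nonsing_inv_cancel_left _ _ hM'],
      trace_mul_comm, mul_assoc, mul_nonsing_inv _ hM', mul_one]
  have hY : M * H * M⁻¹ = M⁻¹ * H * M := by
    rw [← hYT]
    exact isSymm_of_trace_mul_self_eq (by rw [hYY, hYTY])
  rw [commute_iff_eq]
  calc M * M * H = M * (M * H * M⁻¹) * M := by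
        simp only [mul_assoc, nonsing_inv_mul _ hM', mul_one]
    _ = M * (M⁻¹ * H * M) * M := by rw [hY]
    _ = H * (M * M) := by simp only [← mul_assoc, mul_nonsing_inv _ hM', one_mul]

theorem commute_diagonal_of_commute_diagonal_mul_self {d : n → ℝ} (hd : ∀ i, 0 ≤ d i)
    {H : Matrix n n ℝ} (h : Commute (diagonal d * diagonal d) H) : Commute (diagonal d) H := by
  rw [commute_iff_eq] at h ⊢
  ext i j
  have hij := congr_fun₂ h i j
  rw [diagonal_mul_diagonal, diagonal_mul, mul_diagonal] at hij
  rw [diagonal_mul, mul_diagonal]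
  rcases eq_or_ne (H i j) 0 with hH | hH
  · simp [hH]
  have hsq : (d i - d j) * (d i + d j) = 0 :=
    mul_right_cancel₀ hH (by linear_combination hij)
  rcases mul_eq_zero.mp hsq with hdiff | hsum
  · rw [sub_eq_zero.mp hdiff, mul_comm]
  · rw [show d i = d j by linarith [hd i, hd j], mul_comm]

end Matrix

theorem stmt_1 {n : ℕ} (H : Matrix (Fin n) (Fin n) ℝ) (hH : H.IsSymm)
    (m : Fin n → ℝ) (hm : ∀ i, 0 < m i) (M : Matrix (Fin n) (Fin n) ℝ)
    (hM : M = Matrix.diagonal m) (η : ℝ) (hη : 0 < η)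
    (J : Matrix (Fin n) (Fin n) ℝ) (hJ : J = 1 - η • (M⁻¹ * H)) :
    J * Jᵀ = Jᵀ * J ↔ H * M = M * H := by
  have hMsymm : M.IsSymm := hM ▸ isSymm_diagonal m
  have hMdet : IsUnit M.det := by
    rw [hM, det_diagonal]
    exact (Finset.prod_pos fun i _ => hm i).ne'.isUnit
  rw [← commute_iff_eq, ← commute_iff_eq, Commute.symm_iff (a := H), hJ,
    commute_transpose_one_sub_smul_iff hη.ne']
  refine ⟨fun hA => ?_, commute_inv_mul_transpose_of_commute hMsymm hMdet hH⟩
  have hMM := commute_mul_self_of_commute_inv_mul_transpose hMsymm hMdet hH hA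
  rw [hM] at hMM ⊢
  exact commute_diagonal_of_commute_diagonal_mul_self (fun i => (hm i).le) hMM
end

section
/- Let H be a real symmetric n×n matrix with some nonzero off-diagonal entry H_{ij} ≠ 0 (i ≠ j), and M a diagonal matrix with m_i ≠ m_j at those indices. Then for any η > 0, the operator J = I - η M⁻¹H is not normal. -/
/-!
Write `J = 1 - η • A` with `A = D * H` and `D = M⁻¹` diagonal. Since
`J Jᵀ - Jᵀ J = η² (A Aᵀ - Aᵀ A)`, normality of `J` is normality of `A`, i.e. `D H² D = H D² H`.
For symmetric `D`, `H` this forces `C = D² H - H D²` to vanish: `C` is antisymmetric and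
`tr (C Cᵀ) = 2 tr (D (D H² D - H D² H) D) = 0`. But `C i j = (m i⁻² - m j⁻²) H i j ≠ 0`.
-/

open Matrix

namespace Matrix

variable {ι : Type*} [Fintype ι]

theorem one_sub_smul_mul_transpose_sub_transpose_mul [DecidableEq ι] {R : Type*} [CommRing R]
    (c : R) (A : Matrix ι ι R) :
    (1 - c • A) * (1 - c • A)ᵀ - (1 - c • A)ᵀ * (1 - c • A) = c ^ 2 • (A * Aᵀ - Aᵀ * A) := by
  simp only [transpose_sub, transpose_one, transpose_smul, sub_mul, mul_sub, one_mul, mul_one,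
    smul_mul_smul_comm, smul_sub, pow_two]
  abel

theorem mul_transpose_eq_transpose_mul_of_one_sub_smul [DecidableEq ι] {K : Type*} [Field K]
    {c : K} (hc : c ≠ 0) {A : Matrix ι ι K}
    (h : (1 - c • A) * (1 - c • A)ᵀ = (1 - c • A)ᵀ * (1 - c • A)) :
    A * Aᵀ = Aᵀ * A := by
  have hdiff := one_sub_smul_mul_transpose_sub_transpose_mul c A
  rwa [h, sub_self, eq_comm, smul_eq_zero_iff_right (pow_ne_zero 2 hc), sub_eq_zero] at hdiff

theorem commute_mul_self_of_mul_transpose_eq {D H : Matrix ι ι ℝ} (hD : D.IsSymm)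
    (hH : H.IsSymm) (h : (D * H) * (D * H)ᵀ = (D * H)ᵀ * (D * H)) :
    Commute (D * D) H := by
  have hDHHD : D * H * H * D = H * D * D * H := by
    simpa only [transpose_mul, hD.eq, hH.eq, Matrix.mul_assoc] using h
  set E := D * D
  have hEHHE : trace (E * H * H * E) = trace (E * H * E * H) :=
    calc trace (E * H * H * E)
        = trace (D * (D * H * H * D) * D) := by simp only [E, Matrix.mul_assoc]
      _ = trace (D * (D * (H * D * D * H))) := by rw [hDHHD, trace_mul_comm, Matrix.mul_assoc]
      _ = trace (E * H * E * H) := by simp only [E, Matrix.mul_assoc]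
  have hHEEH : trace (H * E * E * H) = trace (E * H * H * E) :=
    calc trace (H * E * E * H)
        = trace (H * H * (E * E)) := by rw [trace_mul_comm]; simp only [Matrix.mul_assoc]
      _ = trace (E * (E * H * H)) := by rw [trace_mul_comm]; simp only [Matrix.mul_assoc]
      _ = trace (E * H * H * E) := trace_mul_comm _ _
  have hHEHE : trace (H * E * H * E) = trace (E * H * E * H) := by
    rw [trace_mul_comm]; simp only [Matrix.mul_assoc]
  set C := E * H - H * E
  have hC : Cᵀ = -C := by
    simp only [C, E, transpose_sub, transpose_mul, hD.eq, hH.eq, Matrix.mul_assoc, neg_sub]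
  have htrace : (C * Cᴴ).trace = 0 := by
    rw [conjTranspose_eq_transpose_of_trivial, hC]
    simp only [C, mul_neg, sub_mul, mul_sub, trace_neg, trace_sub, ← Matrix.mul_assoc, hEHHE,
      hHEEH, hHEHE]
    ring
  exact sub_eq_zero.mp (trace_mul_conjTranspose_self_eq_zero_iff.mp htrace)

theorem inv_diagonal_of_ne_zero [DecidableEq ι] {K : Type*} [Field K] {v : ι → K}
    (hv : ∀ i, v i ≠ 0) : (diagonal v)⁻¹ = diagonal v⁻¹ :=
  inv_eq_left_inv <| by
    rw [diagonal_mul_diagonal, ← diagonal_one]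
    exact congrArg diagonal (funext fun i => inv_mul_cancel₀ (hv i))

end Matrix

theorem stmt_3_general {n : ℕ} (H : Matrix (Fin n) (Fin n) ℝ) (hH : H.IsSymm)
    (m : Fin n → ℝ) (hm : ∀ i, 0 < m i) (M : Matrix (Fin n) (Fin n) ℝ)
    (hM : M = Matrix.diagonal m)
    (i j : Fin n) (hHij : H i j ≠ 0) (hmij : m i ≠ m j)
    (η : ℝ) (hη : 0 < η)
    (J : Matrix (Fin n) (Fin n) ℝ) (hJ : J = 1 - η • (M⁻¹ * H)) :
    J * Jᵀ ≠ Jᵀ * J := by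
  intro hJnormal
  rw [hJ, hM, inv_diagonal_of_ne_zero fun k => (hm k).ne'] at hJnormal
  have hcomm := commute_mul_self_of_mul_transpose_eq (isSymm_diagonal _) hH
    (mul_transpose_eq_transpose_mul_of_one_sub_smul hη.ne' hJnormal)
  have hcomm_ij := congrFun (congrFun hcomm.eq i) j
  rw [diagonal_mul_diagonal, diagonal_mul, mul_diagonal, mul_comm] at hcomm_ij
  have hsq : (m i)⁻¹ * (m i)⁻¹ = (m j)⁻¹ * (m j)⁻¹ := mul_left_cancel₀ hHij hcomm_ij
  rw [mul_self_inj (inv_nonneg.mpr (hm i).le) (inv_nonneg.mpr (hm j).le), _root_.inv_inj] at hsq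
  exact hmij hsq

theorem stmt_3 {n : ℕ} (H : Matrix (Fin n) (Fin n) ℝ) (hH : H.IsSymm)
    (m : Fin n → ℝ) (hm : ∀ i, 0 < m i) (M : Matrix (Fin n) (Fin n) ℝ)
    (hM : M = Matrix.diagonal m)
    (i j : Fin n) (hij : i ≠ j) (hHij : H i j ≠ 0) (hmij : m i ≠ m j)
    (η : ℝ) (hη : 0 < η)
    (J : Matrix (Fin n) (Fin n) ℝ) (hJ : J = 1 - η • (M⁻¹ * H)) :
    J * Jᵀ ≠ Jᵀ * J :=
  stmt_3_general H hH m hm M hM i j hHij hmij η hη J hJ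
end
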